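/- arXiv:2004.04524 — 5 statements merged into one kernel-verified Lean document; each statement's English description precedes it below -/
import Mathlib

section
/- For uncertain variables x : Ω → X and y : Ω → Y, the conditional range of x given an observation y₀ satisfies Bayes' rule: ⟦x | y₀⟧ = {x₀ ∈ ⟦x⟧ : ⟦y | x₀⟧ ∩ {y₀} ≠ ∅}, where ⟦y | x₀⟧ is the conditional range of y given x = x₀. -/
open Set

theorem mem_image_preimage_singleton_comm {Ω X Y : Type*} (x : Ω → X) (y : Ω → Y)
    (x₀ : X) (y₀ : Y) : x₀ ∈ x '' (y ⁻¹' {y₀}) ↔ y₀ ∈ y '' (x ⁻¹' {x₀}) :=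
  exists_congr fun _ => and_comm

theorem bayes_rule_uncertain {Ω X Y : Type*} (x : Ω → X) (y : Ω → Y) (y₀ : Y) :
    x '' (y ⁻¹' {y₀}) = {x₀ ∈ Set.range x | y '' (x ⁻¹' {x₀}) ∩ {y₀} ≠ ∅} := by
  ext x₀
  rw [mem_ofPred_eq, ← nonempty_iff_ne_empty, inter_singleton_nonempty,
    mem_image_preimage_singleton_comm y x]
  exact ⟨fun h => ⟨image_subset_range _ _ h, h⟩, And.right⟩
end

section
/- Two uncertain variables u₁ : Ω → U₁ and u₂ : Ω → U₂ are unrelated (i.e., their joint range equals the Cartesian product of their marginal ranges) if and only if for every u in the range of u₂, the conditional range of u₁ given u equals the marginal range of u₁: ⟦u₁ | u⟧ = ⟦u₁⟧. -/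
/-! The joint range always lies in the product of the marginal ranges, and its fibre over `u`
is `⟦u₁ | u⟧ × {u}`. So the joint range fills the product exactly when every conditional range over
`⟦u₂⟧` contains, hence equals, `⟦u₁⟧`. -/

open Set

theorem Set.mk_mem_range_pair_iff {Ω α β : Type*} (f : Ω → α) (g : Ω → β) (a : α) (b : β) :
    (a, b) ∈ range (fun ω => (f ω, g ω)) ↔ a ∈ f '' (g ⁻¹' {b}) := by
  simp only [mem_range, Prod.mk.injEq, mem_image, mem_preimage, mem_singleton_iff, and_comm]

theorem unrelated_iff_conditional_full {Ω U₁ U₂ : Type*} (u₁ : Ω → U₁) (u₂ : Ω → U₂) :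
    Set.range (fun ω => (u₁ ω, u₂ ω)) = Set.range u₁ ×ˢ Set.range u₂ ↔
      ∀ u ∈ Set.range u₂, u₁ '' (u₂ ⁻¹' {u}) = Set.range u₁ := by
  calc range (fun ω => (u₁ ω, u₂ ω)) = range u₁ ×ˢ range u₂
      ↔ range u₁ ×ˢ range u₂ ⊆ range (fun ω => (u₁ ω, u₂ ω)) := by
        rw [Subset.antisymm_iff, and_iff_right (range_pair_subset u₁ u₂)]
    _ ↔ ∀ u ∈ range u₂, range u₁ ⊆ u₁ '' (u₂ ⁻¹' {u}) := by
        simp only [prod_subset_iff, mk_mem_range_pair_iff]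
        exact forall₂_comm
    _ ↔ ∀ u ∈ range u₂, u₁ '' (u₂ ⁻¹' {u}) = range u₁ :=
        forall₂_congr fun _ _ => by
          rw [Subset.antisymm_iff, and_iff_right (image_subset_range _ _)]
end

section
/- Invariance of unrelatedness under maps: if u₁ : Ω → U₁ and u₂ : Ω → U₂ are unrelated uncertain variables, then for arbitrary maps h₁ : U₁ → V₁ and h₂ : U₂ → V₂, the uncertain variables h₁ ∘ u₁ and h₂ ∘ u₂ are unrelated; in particular, for every u ∈ Set.range u₂, ⟦h₁(u₁) | h₂(u)⟧ = ⟦h₁(u₁)⟧. -/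
/-!
The joint range of `(h₁ ∘ u₁, h₂ ∘ u₂)` is the image of the joint range of `(u₁, u₂)` under
`Prod.map h₁ h₂`, and `Prod.map` sends products of sets to products of images. Conditioning an
unrelated pair on an attainable value `v` of the second map loses nothing, since every value of the
first map is attained jointly with `v`.
-/

open Set

namespace Function

variable {Ω U₁ U₂ V₁ V₂ : Type*}

def Unrelated (u₁ : Ω → U₁) (u₂ : Ω → U₂) : Prop :=
  range (fun ω => (u₁ ω, u₂ ω)) = range u₁ ×ˢ range u₂

theorem Unrelated.comp {u₁ : Ω → U₁} {u₂ : Ω → U₂} (hun : Unrelated u₁ u₂)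
    (h₁ : U₁ → V₁) (h₂ : U₂ → V₂) : Unrelated (h₁ ∘ u₁) (h₂ ∘ u₂) :=
  calc range (fun ω => (h₁ (u₁ ω), h₂ (u₂ ω)))
      _ = Prod.map h₁ h₂ '' range (fun ω => (u₁ ω, u₂ ω)) :=
        range_comp' (Prod.map h₁ h₂) fun ω => (u₁ ω, u₂ ω)
      _ = Prod.map h₁ h₂ '' (range u₁ ×ˢ range u₂) := by rw [hun]
      _ = range (h₁ ∘ u₁) ×ˢ range (h₂ ∘ u₂) := by rw [prodMap_image_prod, range_comp, range_comp]

theorem Unrelated.image_preimage_singleton {u₁ : Ω → U₁} {u₂ : Ω → U₂} (hun : Unrelated u₁ u₂)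
    {v : U₂} (hv : v ∈ range u₂) : u₁ '' (u₂ ⁻¹' {v}) = range u₁ := by
  refine (image_subset_range _ _).antisymm fun x hx => ?_
  have hxv : (x, v) ∈ range (fun ω => (u₁ ω, u₂ ω)) := by
    rw [hun]
    exact ⟨hx, hv⟩
  obtain ⟨ω, hω⟩ := hxv
  exact ⟨ω, congrArg Prod.snd hω, congrArg Prod.fst hω⟩

end Function

theorem unrelatedness_invariant_under_maps {Ω U₁ U₂ V₁ V₂ : Type*}
    (u₁ : Ω → U₁) (u₂ : Ω → U₂) (h₁ : U₁ → V₁) (h₂ : U₂ → V₂)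
    (hun : Set.range (fun ω => (u₁ ω, u₂ ω)) = Set.range u₁ ×ˢ Set.range u₂) :
    (Set.range (fun ω => (h₁ (u₁ ω), h₂ (u₂ ω))) =
       Set.range (h₁ ∘ u₁) ×ˢ Set.range (h₂ ∘ u₂)) ∧
    ∀ u ∈ Set.range u₂,
      (h₁ ∘ u₁) '' ((h₂ ∘ u₂) ⁻¹' {h₂ u}) = Set.range (h₁ ∘ u₁) := by
  have hmap : Function.Unrelated (h₁ ∘ u₁) (h₂ ∘ u₂) := Function.Unrelated.comp hun h₁ h₂
  refine ⟨hmap, ?_⟩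
  rintro _ ⟨ω, rfl⟩
  exact hmap.image_preimage_singleton ⟨ω, rfl⟩
end

section
/- Update step under unrelatedness (linear/nonlinear measurement): suppose y(ω) = g(x(ω), v(ω)) on Ω and v is unrelated to the pair (x, restriction to event E), in the sense that v '' (E ∩ x ⁻¹' {x₀}) = Set.range v for every x₀ ∈ x '' E. Then the posterior range {x(ω) : ω ∈ E, y(ω) = y₀} equals (⋃_{v₀ ∈ Set.range v} {x₀ : g x₀ v₀ = y₀}) ∩ (x '' E). -/
/-!
An observation `y₀` is compatible with `x₀` exactly when some noise value `v₀` realised on the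
fibre `E ∩ x ⁻¹' {x₀}` satisfies `g x₀ v₀ = y₀`. Unrelatedness says these fibre values are all
of `Set.range v`, so the posterior no longer depends on how `v` and `x` are coupled.
-/

open Set

lemma exists_mem_fiber_and_eq_iff {Ω X V Y : Type*} (x : Ω → X) (v : Ω → V) (g : X → V → Y)
    (E : Set Ω) (x₀ : X) (y₀ : Y) :
    (∃ ω ∈ E, x ω = x₀ ∧ g (x ω) (v ω) = y₀) ↔ ∃ v₀ ∈ v '' (E ∩ x ⁻¹' {x₀}), g x₀ v₀ = y₀ := by
  constructor
  · rintro ⟨ω, hωE, rfl, hg⟩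
    exact ⟨v ω, ⟨ω, ⟨hωE, rfl⟩, rfl⟩, hg⟩
  · rintro ⟨-, ⟨ω, ⟨hωE, hωx⟩, rfl⟩, hg⟩
    exact ⟨ω, hωE, hωx, hωx ▸ hg⟩

theorem update_step_unrelated {Ω X V Y : Type*}
    (x : Ω → X) (v : Ω → V) (g : X → V → Y) (y : Ω → Y)
    (hy : ∀ ω, y ω = g (x ω) (v ω)) (E : Set Ω) (y₀ : Y)
    (hun : ∀ x₀ ∈ x '' E, v '' (E ∩ x ⁻¹' {x₀}) = Set.range v) :
    {x₀ | ∃ ω ∈ E, x ω = x₀ ∧ y ω = y₀} =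
      (⋃ v₀ ∈ Set.range v, {x₀ | g x₀ v₀ = y₀}) ∩ (x '' E) := by
  obtain rfl : y = fun ω => g (x ω) (v ω) := funext hy
  ext x₀
  simp only [mem_ofPred_eq, exists_mem_fiber_and_eq_iff, mem_inter_iff, mem_iUnion₂, exists_prop]
  constructor
  · rintro ⟨v₀, hv₀, hg⟩
    refine ⟨⟨v₀, image_subset_range v _ hv₀, hg⟩, ?_⟩
    obtain ⟨ω, ⟨hωE, hωx⟩, -⟩ := hv₀
    exact ⟨ω, hωE, hωx⟩
  · rintro ⟨hg, hx⟩
    rwa [hun x₀ hx]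
end

section
/- Non-stochastic Markov property from unrelatedness: suppose x_{k} = f(x_{k-1}, w) pointwise, and w is unrelated to the pair (x_{k-1}, z) for some function z : Ω → Z (i.e., the joint range of (w, (x_{k-1}, z)) equals the product of the ranges). Then for all (x₀, z₀) in the range of (x_{k-1}, z), the conditional range of x_k given x_{k-1} = x₀ and z = z₀ equals the conditional range of x_k given x_{k-1} = x₀ alone: xk '' ((x_{k-1}) ⁻¹' {x₀} ∩ z ⁻¹' {z₀}) = xk '' ((x_{k-1}) ⁻¹' {x₀}). -/
theorem Set.exists_fst_eq_and_snd_eq_of_range_eq_prod {Ω W V : Type*} {w : Ω → W} {v : Ω → V}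
    (hun : Set.range (fun ω => (w ω, v ω)) = Set.range w ×ˢ Set.range v) (ω : Ω) {v₀ : V}
    (hv₀ : v₀ ∈ Set.range v) : ∃ ω', w ω' = w ω ∧ v ω' = v₀ := by
  have hmem : (w ω, v₀) ∈ Set.range (fun ω => (w ω, v ω)) := hun ▸ ⟨⟨ω, rfl⟩, hv₀⟩
  obtain ⟨ω', hω'⟩ := hmem
  exact ⟨ω', congrArg Prod.fst hω', congrArg Prod.snd hω'⟩

theorem nonstochastic_markov_property {Ω X W Z X' : Type*}
    (xk1 : Ω → X) (w : Ω → W) (z : Ω → Z) (f : X → W → X') (xk : Ω → X')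
    (hx : ∀ ω, xk ω = f (xk1 ω) (w ω))
    (hun : Set.range (fun ω => (w ω, (xk1 ω, z ω))) =
      Set.range w ×ˢ Set.range (fun ω => (xk1 ω, z ω)))
    (x₀ : X) (z₀ : Z) (h : (x₀, z₀) ∈ Set.range (fun ω => (xk1 ω, z ω))) :
    xk '' (xk1 ⁻¹' {x₀} ∩ z ⁻¹' {z₀}) = xk '' (xk1 ⁻¹' {x₀}) := by
  refine (Set.image_mono Set.inter_subset_left).antisymm ?_
  rintro _ ⟨ω, hω : xk1 ω = x₀, rfl⟩
  obtain ⟨ω', hw, hv⟩ := Set.exists_fst_eq_and_snd_eq_of_range_eq_prod hun ω h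
  obtain ⟨hx₀, hz₀⟩ := Prod.mk.inj hv
  exact ⟨ω', ⟨hx₀, hz₀⟩, by rw [hx, hx, hw, hx₀, hω]⟩
end
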